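/- arXiv:2512.12825 — 2 statements merged into one kernel-verified Lean document; each statement's English description precedes it below -/
import Mathlib

section
/- If D† generates a semigroup of unital completely positive maps, then for every operator W, D†(W)† W + W† D†(W) ≤ D†(W† W), where the inequality is in the operator order. -/
/-!
Apply the ampliation `id₂ ⊗ P t` to the positive block matrix `[1, W]† [1, W]`: unitality turns
the image into `[[1, P t W], [(P t W)†, P t (W† W)]]`, whose Schur complement gives the Schwarz
inequality `(P t W)† (P t W) ≤ P t (W† W)` for `t ≥ 0`. The difference of the two sides vanishes
at `t = 0`, so its right derivative there, `D (W† W) - (D W)† W - W† D W`, is a limit of the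
positive matrices `t⁻¹ (P t (W† W) - (P t W)† (P t W))`, hence positive because the positive
semidefinite cone is closed.
-/

open Matrix
open scoped ComplexOrder

attribute [local instance] Matrix.linftyOpNormedAddCommGroup Matrix.linftyOpNormedRing
  Matrix.linftyOpNormedAlgebra

/-- Complete positivity: all ampliations `id_k ⊗ Φ` preserve positive semidefiniteness. -/
def IsCompletelyPositive {a b : Type*} [Fintype a] [Fintype b]
    (Φ : Matrix a a ℂ → Matrix b b ℂ) : Prop :=
  ∀ (k : ℕ) (M : Matrix (Fin k × a) (Fin k × a) ℂ), M.PosSemidef →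
    (Matrix.of fun (r s : Fin k × b) =>
      Φ (Matrix.of fun i j => M (r.1, i) (s.1, j)) r.2 s.2).PosSemidef

namespace Matrix

lemma isClosed_setOf_posSemidef {m : Type*} [Fintype m] :
    IsClosed {A : Matrix m m ℂ | A.PosSemidef} := by
  have h : {A : Matrix m m ℂ | A.PosSemidef}
      = {A | Aᴴ = A} ∩ ⋂ x : m → ℂ, {A | 0 ≤ star x ⬝ᵥ A *ᵥ x} := by
    ext A
    simp [posSemidef_iff_dotProduct_mulVec, IsHermitian, Set.mem_iInter]
  rw [h]
  exact (isClosed_eq (by fun_prop) continuous_id).inter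
    (isClosed_iInter fun x => isClosed_le continuous_const (by fun_prop))

lemma PosSemidef.of_hasDerivWithinAt_Ioi {m : Type*} [Fintype m] [DecidableEq m]
    {f : ℝ → Matrix m m ℂ} {f' : Matrix m m ℂ} (hf : HasDerivWithinAt f f' (Set.Ioi 0) 0)
    (h0 : f 0 = 0) (hpos : ∀ t > 0, (f t).PosSemidef) : f'.PosSemidef := by
  have hslope := (hasDerivWithinAt_iff_tendsto_slope' Set.self_notMem_Ioi).mp hf
  refine isClosed_setOf_posSemidef.mem_of_tendsto hslope ?_
  filter_upwards [self_mem_nhdsWithin] with t (ht : 0 < t)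
  rw [slope_def_module, h0, sub_zero, sub_zero]
  exact (hpos t ht).smul (inv_nonneg.mpr ht.le)

lemma posSemidef_blockGram {k : ℕ} {a : Type*} [Fintype a] (V : Fin k → Matrix a a ℂ) :
    (of fun r s : Fin k × a => ((V r.1)ᴴ * V s.1) r.2 s.2).PosSemidef := by
  convert posSemidef_conjTranspose_mul_self (of fun i (s : Fin k × a) => V s.1 i s.2)
  ext r s
  simp [mul_apply]

end Matrix

section CompletelyPositive

variable {a b : Type*} [Fintype a] [Fintype b]

lemma IsCompletelyPositive.posSemidef_map_blockGram {Φ : Matrix a a ℂ → Matrix b b ℂ}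
    (hΦ : IsCompletelyPositive Φ) {k : ℕ} (V : Fin k → Matrix a a ℂ) :
    (of fun r s : Fin k × b => Φ ((V r.1)ᴴ * V s.1) r.2 s.2).PosSemidef :=
  hΦ k _ (posSemidef_blockGram V)

lemma IsCompletelyPositive.kadison_schwarz [DecidableEq a] [DecidableEq b]
    {Φ : Matrix a a ℂ → Matrix b b ℂ} (hΦ : IsCompletelyPositive Φ) (hΦ1 : Φ 1 = 1)
    (W : Matrix a a ℂ) : (Φ (Wᴴ * W) - (Φ W)ᴴ * Φ W).PosSemidef := by
  let e : Fin 2 × b ≃ b ⊕ b :=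
    (finTwoEquiv.prodCongr (Equiv.refl b)).trans (Equiv.boolProdEquivSum b)
  have hblock := (hΦ.posSemidef_map_blockGram ![1, W]).submatrix e.symm
  have hform : (of fun r s : Fin 2 × b => Φ ((![1, W] r.1)ᴴ * ![1, W] s.1) r.2 s.2).submatrix
      e.symm e.symm = fromBlocks 1 (Φ W) (Φ Wᴴ) (Φ (Wᴴ * W)) := by
    ext (i | i) (j | j) <;> simp [e, finTwoEquiv, hΦ1]
  rw [hform] at hblock
  have hadj : (Φ W)ᴴ = Φ Wᴴ := (isHermitian_fromBlocks_iff.mp hblock.isHermitian).2.1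
  have : Invertible (1 : Matrix b b ℂ) := invertibleOne
  rw [← hadj, PosDef.fromBlocks₁₁ _ _ PosDef.one] at hblock
  simpa using hblock

end CompletelyPositive

/-- Lindblad's dissipativity inequality: if `D` generates a semigroup `P t = e^{tD}` of
unital completely positive maps, then `D(W)† W + W† D(W) ≤ D(W† W)` for every `W`. -/
theorem stmt_7 {n : ℕ}
    (D : Matrix (Fin n) (Fin n) ℂ →ₗ[ℂ] Matrix (Fin n) (Fin n) ℂ)
    (P : ℝ → (Matrix (Fin n) (Fin n) ℂ →ₗ[ℂ] Matrix (Fin n) (Fin n) ℂ))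
    (hP0 : P 0 = LinearMap.id)
    (hPder : ∀ (X : Matrix (Fin n) (Fin n) ℂ) (t : ℝ),
      HasDerivAt (fun s => P s X) (D (P t X)) t)
    (hCP : ∀ t ≥ (0:ℝ),
      IsCompletelyPositive ((P t) : Matrix (Fin n) (Fin n) ℂ → Matrix (Fin n) (Fin n) ℂ))
    (hunital : ∀ t ≥ (0:ℝ), P t 1 = 1) :
    ∀ W : Matrix (Fin n) (Fin n) ℂ,
      (D (Wᴴ * W) - ((D W)ᴴ * W + Wᴴ * (D W))).PosSemidef := by
  intro W
  have hP0_apply (X : Matrix (Fin n) (Fin n) ℂ) : P 0 X = X := by simp [hP0]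
  have hderiv (X : Matrix (Fin n) (Fin n) ℂ) : HasDerivAt (fun s => P s X) (D X) 0 := by
    simpa [hP0_apply] using hPder X 0
  have hderiv_adj : HasDerivAt (fun s => (P s W)ᴴ) (D W)ᴴ 0 :=
    (starL' ℝ : Matrix (Fin n) (Fin n) ℂ ≃L[ℝ] _).hasFDerivAt.comp_hasDerivAt 0 (hderiv W)
  have hQ : HasDerivAt (fun t => P t (Wᴴ * W) - (P t W)ᴴ * P t W)
      (D (Wᴴ * W) - ((D W)ᴴ * W + Wᴴ * D W)) 0 := by
    have := (hderiv (Wᴴ * W)).sub (hderiv_adj.mul (hderiv W))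
    rwa [hP0_apply] at this
  exact PosSemidef.of_hasDerivWithinAt_Ioi hQ.hasDerivWithinAt (by simp [hP0_apply])
    fun t ht => (hCP t ht.le).kadison_schwarz (hunital t ht.le) W
end

section
/- Let ℋ and ℋ̃ be Volterra integral operators on 𝒞 with kernel bounds at most C, and let Y, Ỹ solve Y = ℋY + Z and Ỹ = ℋ̃Ỹ + Z̃ respectively. Then ‖Y − Ỹ‖_𝒞 ≤ (1/(TC))(e^{2TC} − 1) ‖ℋ − ℋ̃‖_{𝒞→𝒞} · min{‖Z‖_𝒞, ‖Z̃‖_𝒞} + e^{2TC} ‖Z − Z̃‖_𝒞. -/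
/-!
Freezing `Y'` after time `τ` into `W`, the identity
`Y - Y' = ℋ (Y - Y') + (ℋ - ℋ̃) W + (Z - Z')` holds at `τ`. Gronwall's lemma gives
`‖Y' σ‖ ≤ ‖Z'‖ e^{Cσ}`, so the middle term is at most `δ ‖Z'‖ e^{Cτ}`, and Gronwall's lemma with
this exponential forcing bounds `‖Y - Y'‖` by `(δ ‖Z'‖ (1 + CT) + ‖Z - Z'‖) e^{CT}`. Exchanging the
two equations replaces `‖Z'‖` by the minimum, and `(1 + x) e^x ≤ (e^{2x} - 1) / x` gives the
stated constants.
-/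

open Set MeasureTheory Real

theorem integral_add_div_le_of_le_mul_integral_add_exp {g : ℝ → ℝ} {T C a b : ℝ} (hC : 0 < C)
    (hg : ContinuousOn g (Icc 0 T))
    (h : ∀ τ ∈ Icc 0 T, g τ ≤ C * (∫ σ in (0:ℝ)..τ, g σ) + a * exp (C * τ) + b) :
    ∀ τ ∈ Icc 0 T, (∫ σ in (0:ℝ)..τ, g σ) + b / C ≤ (a * τ + b / C) * exp (C * τ) := by
  set u : ℝ → ℝ := fun t => ∫ σ in (0:ℝ)..t, g σ
  have hu : ContinuousOn u (Icc 0 T) := by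
    intro t ht
    have hT : 0 ≤ T := ht.1.trans ht.2
    have := intervalIntegral.continuousOn_primitive_interval (μ := volume) (a := 0) (b := T)
      (by rw [uIcc_of_le hT]; exact hg.integrableOn_Icc)
    rw [uIcc_of_le hT] at this
    exact this t ht
  have hu' : ∀ x ∈ Ioo 0 T, HasDerivAt u (g x) x := fun x hx =>
    intervalIntegral.integral_hasDerivAt_right
      ((hg.mono (Icc_subset_Icc_right hx.2.le)).intervalIntegrable_of_Icc hx.1.le)
      (hg.mono Ioo_subset_Icc_self |>.stronglyMeasurableAtFilter isOpen_Ioo x hx)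
      (hg.continuousAt (Icc_mem_nhds hx.1 hx.2))
  -- The integrating factor of `u' ≤ C u + a e^{Ct} + b` makes this antitone.
  set v : ℝ → ℝ := fun t => exp (-(C * t)) * (u t + b / C) - a * t
  have hv : AntitoneOn v (Icc 0 T) := by
    refine antitoneOn_of_hasDerivWithinAt_nonpos (convex_Icc 0 T)
      (f' := fun x => exp (-(C * x)) * (g x - C * u x - b) - a) (by fun_prop) (fun x hx => ?_)
      (fun x hx => ?_) <;> rw [interior_Icc] at hx
    · have := ((((hasDerivAt_id' x).const_mul C).fun_neg.exp).fun_mul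
        ((hu' x hx).add_const (b / C))).fun_sub ((hasDerivAt_id' x).const_mul a)
      refine (this.congr_deriv ?_).hasDerivWithinAt
      field_simp
      ring
    · have hgx := h x (Ioo_subset_Icc_self hx)
      have : exp (-(C * x)) * (a * exp (C * x)) = a := by
        rw [mul_left_comm, ← exp_add, neg_add_cancel, exp_zero, mul_one]
      nlinarith [exp_pos (-(C * x))]
  intro τ hτ
  have hv0 := hv ⟨le_rfl, hτ.1.trans hτ.2⟩ hτ hτ.1
  simp only [v, u, intervalIntegral.integral_same, mul_zero, neg_zero, exp_zero, one_mul,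
    zero_add, sub_zero] at hv0
  calc (∫ σ in (0:ℝ)..τ, g σ) + b / C
      = exp (-(C * τ)) * ((∫ σ in (0:ℝ)..τ, g σ) + b / C) * exp (C * τ) := by
        rw [mul_right_comm, ← exp_add, neg_add_cancel, exp_zero, one_mul]
    _ ≤ (a * τ + b / C) * exp (C * τ) := by gcongr; linarith

theorem le_mul_exp_of_le_mul_integral_add_exp {g : ℝ → ℝ} {T C a b : ℝ} (hC : 0 < C)
    (hg : ContinuousOn g (Icc 0 T))
    (h : ∀ τ ∈ Icc 0 T, g τ ≤ C * (∫ σ in (0:ℝ)..τ, g σ) + a * exp (C * τ) + b) :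
    ∀ τ ∈ Icc 0 T, g τ ≤ (a * (1 + C * τ) + b) * exp (C * τ) := by
  intro τ hτ
  have hprim := integral_add_div_le_of_le_mul_integral_add_exp hC hg h τ hτ
  calc g τ ≤ C * ((∫ σ in (0:ℝ)..τ, g σ) + b / C) + a * exp (C * τ) := by
        rw [mul_add, mul_div_cancel₀ b hC.ne']; linarith [h τ hτ]
    _ ≤ C * ((a * τ + b / C) * exp (C * τ)) + a * exp (C * τ) := by gcongr
    _ = (a * (1 + C * τ) + b) * exp (C * τ) := by field_simp; ring

theorem one_add_mul_exp_le {x : ℝ} (hx : 0 < x) : (1 + x) * exp x ≤ 1 / x * (exp (2 * x) - 1) := by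
  set p := 1 + x + x ^ 2 / 2 + x ^ 3 / 6
  have hp : p ≤ exp x := by
    simpa [Finset.sum_range_succ, Nat.factorial, p, add_assoc] using sum_le_exp_of_nonneg hx.le 4
  -- `y ↦ y ^ 2 - (x + x ^ 2) y - 1` is increasing for `y ≥ p`, and nonnegative at `y = p`.
  have hpoly : 0 ≤ p ^ 2 - (x + x ^ 2) * p - 1 := by
    have : p ^ 2 - (x + x ^ 2) * p - 1 = x - x ^ 3 / 6 - x ^ 4 / 12 + x ^ 6 / 36 := by ring
    rw [this]
    nlinarith [sq_nonneg (x ^ 2 - 2), sq_nonneg (x - 2), sq_nonneg (x ^ 2 - x - 2), pow_pos hx 3]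
  have hexp2 : exp (2 * x) = exp x ^ 2 := by rw [← exp_nat_mul]; norm_num
  have hsum : 0 ≤ exp x + p - (x + x ^ 2) := by
    have : 2 * p - (x + x ^ 2) = 2 + x + x ^ 3 / 3 := by ring
    nlinarith [pow_pos hx 3]
  rw [one_div_mul_eq_div, le_div_iff₀' hx, hexp2]
  nlinarith [mul_nonneg (sub_nonneg.2 hp) hsum]

theorem norm_le_iSup_norm {α E : Type*} [TopologicalSpace α] [NormedAddCommGroup E] {s : Set α}
    {f : α → E} (hs : IsCompact s) (hf : ContinuousOn f s) {x : α} (hx : x ∈ s) :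
    ‖f x‖ ≤ ⨆ y : s, ‖f y‖ := by
  obtain ⟨B, hB⟩ := hs.exists_bound_of_continuousOn hf
  exact le_ciSup ⟨B, by rintro _ ⟨y, rfl⟩; exact hB y y.2⟩ (⟨x, hx⟩ : s)

section Volterra

variable {X : Type*} [NormedAddCommGroup X] [NormedSpace ℝ X]

noncomputable def volterra (K : ℝ → ℝ → X →L[ℝ] X) (f : ℝ → X) (τ : ℝ) : X :=
  ∫ σ in (0:ℝ)..τ, K τ σ (f σ)

theorem norm_volterra_le {K : ℝ → ℝ → X →L[ℝ] X} {f : ℝ → X} {τ C : ℝ} (hτ : 0 ≤ τ)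
    (hK : ∀ σ ∈ Icc 0 τ, ‖K τ σ‖ ≤ C) (hf : ContinuousOn f (Icc 0 τ)) :
    ‖volterra K f τ‖ ≤ C * ∫ σ in (0:ℝ)..τ, ‖f σ‖ := by
  rw [← intervalIntegral.integral_const_mul]
  exact intervalIntegral.norm_integral_le_of_norm_le hτ
    (ae_of_all _ fun σ hσ => (K τ σ).le_of_opNorm_le (hK σ (Ioc_subset_Icc_self hσ)) _)
    ((hf.norm.intervalIntegrable_of_Icc hτ).const_mul C)

theorem volterra_sub {K : ℝ → ℝ → X →L[ℝ] X} {f g : ℝ → X} {τ : ℝ} (hτ : 0 ≤ τ)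
    (hK : ContinuousOn (K τ) (Icc 0 τ)) (hf : ContinuousOn f (Icc 0 τ))
    (hg : ContinuousOn g (Icc 0 τ)) :
    volterra K (fun σ => f σ - g σ) τ = volterra K f τ - volterra K g τ := by
  simp only [volterra, map_sub]
  exact intervalIntegral.integral_sub ((hK.clm_apply hf).intervalIntegrable_of_Icc hτ)
    ((hK.clm_apply hg).intervalIntegrable_of_Icc hτ)

theorem volterra_comp_min {K : ℝ → ℝ → X →L[ℝ] X} {f : ℝ → X} {τ : ℝ} (hτ : 0 ≤ τ) :
    volterra K (fun σ => f (min σ τ)) τ = volterra K f τ :=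
  intervalIntegral.integral_congr fun σ hσ => by
    rw [uIcc_of_le hτ] at hσ
    simp only [min_eq_left hσ.2]

variable {T C : ℝ} {K G G' : ℝ → ℝ → X →L[ℝ] X} {Y Y' Z Z' : ℝ → X}

theorem norm_le_mul_exp_of_eq_volterra_add {M : ℝ} (hC : 0 < C)
    (hK : ∀ τ ∈ Icc 0 T, ∀ σ ∈ Icc 0 τ, ‖K τ σ‖ ≤ C) (hY : ContinuousOn Y (Icc 0 T))
    (hYeq : ∀ τ ∈ Icc 0 T, Y τ = volterra K Y τ + Z τ) (hZ : ∀ τ ∈ Icc 0 T, ‖Z τ‖ ≤ M) :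
    ∀ τ ∈ Icc 0 T, ‖Y τ‖ ≤ M * exp (C * τ) := by
  have := le_mul_exp_of_le_mul_integral_add_exp (a := 0) hC hY.norm fun τ hτ => by
    calc ‖Y τ‖ ≤ ‖volterra K Y τ‖ + ‖Z τ‖ := hYeq τ hτ ▸ norm_add_le _ _
      _ ≤ C * (∫ σ in (0:ℝ)..τ, ‖Y σ‖) + 0 * exp (C * τ) + M := by
        rw [zero_mul, add_zero]
        exact add_le_add (norm_volterra_le hτ.1 (hK τ hτ) (hY.mono (Icc_subset_Icc_right hτ.2)))
          (hZ τ hτ)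
  simpa using this

theorem norm_sub_le_of_eq_volterra_add {δ M' ε : ℝ} (hC : 0 < C)
    (hG : Continuous fun p : ℝ × ℝ => G p.1 p.2)
    (hGb : ∀ τ ∈ Icc 0 T, ∀ σ ∈ Icc 0 τ, ‖G τ σ‖ ≤ C)
    (hG'b : ∀ τ ∈ Icc 0 T, ∀ σ ∈ Icc 0 τ, ‖G' τ σ‖ ≤ C)
    (hY : ContinuousOn Y (Icc 0 T)) (hY' : ContinuousOn Y' (Icc 0 T))
    (hYeq : ∀ τ ∈ Icc 0 T, Y τ = volterra G Y τ + Z τ)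
    (hY'eq : ∀ τ ∈ Icc 0 T, Y' τ = volterra G' Y' τ + Z' τ)
    (hδ0 : 0 ≤ δ) (hδ : ∀ W : ℝ → X, ContinuousOn W (Icc 0 T) → ∀ τ ∈ Icc 0 T,
      ‖volterra G W τ - volterra G' W τ‖ ≤ δ * ⨆ σ : Icc 0 T, ‖W σ‖)
    (hZ' : ∀ τ ∈ Icc 0 T, ‖Z' τ‖ ≤ M') (hZZ' : ∀ τ ∈ Icc 0 T, ‖Z τ - Z' τ‖ ≤ ε) :
    ∀ τ ∈ Icc 0 T, ‖Y τ - Y' τ‖ ≤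
      C * (∫ σ in (0:ℝ)..τ, ‖Y σ - Y' σ‖) + δ * M' * exp (C * τ) + ε := by
  intro τ hτ
  have hsub : Icc 0 τ ⊆ Icc 0 T := Icc_subset_Icc_right hτ.2
  have hY'bound := norm_le_mul_exp_of_eq_volterra_add hC hG'b hY' hY'eq hZ'
  have hM' : 0 ≤ M' := (norm_nonneg _).trans (hZ' τ hτ)
  have hdecomp : Y τ - Y' τ = volterra G (fun σ => Y σ - Y' σ) τ +
      (volterra G Y' τ - volterra G' Y' τ) + (Z τ - Z' τ) := by
    rw [volterra_sub hτ.1 (hG.comp (.prodMk_right τ)).continuousOn (hY.mono hsub)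
      (hY'.mono hsub), hYeq τ hτ, hY'eq τ hτ]
    abel
  -- Freezing `Y'` after time `τ` leaves `volterra · Y' τ` unchanged but caps its sup by `M' e^{Cτ}`.
  set W : ℝ → X := fun σ => Y' (min σ τ)
  have hW : ContinuousOn W (Icc 0 T) :=
    hY'.comp (continuous_id.min continuous_const).continuousOn fun σ hσ =>
      ⟨le_min hσ.1 hτ.1, (min_le_right _ _).trans hτ.2⟩
  have hWsup : ⨆ σ : Icc 0 T, ‖W σ‖ ≤ M' * exp (C * τ) := by
    refine Real.iSup_le (fun σ => ?_) (by positivity)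
    calc ‖W σ‖ ≤ M' * exp (C * min (σ : ℝ) τ) :=
          hY'bound _ ⟨le_min σ.2.1 hτ.1, (min_le_right _ _).trans hτ.2⟩
      _ ≤ M' * exp (C * τ) := by gcongr; exact min_le_right _ _
  have hperturb : ‖volterra G Y' τ - volterra G' Y' τ‖ ≤ δ * M' * exp (C * τ) := by
    rw [← volterra_comp_min hτ.1, ← volterra_comp_min (K := G') hτ.1, mul_assoc]
    exact (hδ W hW τ hτ).trans (by gcongr)
  calc ‖Y τ - Y' τ‖ ≤ ‖volterra G (fun σ => Y σ - Y' σ) τ‖ +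
        ‖volterra G Y' τ - volterra G' Y' τ‖ + ‖Z τ - Z' τ‖ := by
        rw [hdecomp]; exact norm_add₃_le
    _ ≤ _ := by
      gcongr
      · exact norm_volterra_le hτ.1 (hGb τ hτ) ((hY.sub hY').mono hsub)
      · exact hZZ' τ hτ

theorem iSup_norm_sub_le_of_eq_volterra_add {δ : ℝ} (hT : 0 ≤ T) (hC : 0 < C)
    (hG : Continuous fun p : ℝ × ℝ => G p.1 p.2)
    (hGb : ∀ τ ∈ Icc 0 T, ∀ σ ∈ Icc 0 τ, ‖G τ σ‖ ≤ C)
    (hG'b : ∀ τ ∈ Icc 0 T, ∀ σ ∈ Icc 0 τ, ‖G' τ σ‖ ≤ C)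
    (hZ : ContinuousOn Z (Icc 0 T)) (hZ' : ContinuousOn Z' (Icc 0 T))
    (hY : ContinuousOn Y (Icc 0 T)) (hY' : ContinuousOn Y' (Icc 0 T))
    (hYeq : ∀ τ ∈ Icc 0 T, Y τ = volterra G Y τ + Z τ)
    (hY'eq : ∀ τ ∈ Icc 0 T, Y' τ = volterra G' Y' τ + Z' τ)
    (hδ0 : 0 ≤ δ) (hδ : ∀ W : ℝ → X, ContinuousOn W (Icc 0 T) → ∀ τ ∈ Icc 0 T,
      ‖volterra G W τ - volterra G' W τ‖ ≤ δ * ⨆ σ : Icc 0 T, ‖W σ‖) :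
    ⨆ τ : Icc 0 T, ‖Y τ - Y' τ‖ ≤
      (δ * (⨆ τ : Icc 0 T, ‖Z' τ‖) * (1 + C * T) + ⨆ τ : Icc 0 T, ‖Z τ - Z' τ‖) *
        exp (C * T) := by
  have hM' : 0 ≤ ⨆ τ : Icc 0 T, ‖Z' τ‖ := Real.iSup_nonneg fun _ => norm_nonneg _
  have hε : 0 ≤ ⨆ τ : Icc 0 T, ‖Z τ - Z' τ‖ := Real.iSup_nonneg fun _ => norm_nonneg _
  have hgron := le_mul_exp_of_le_mul_integral_add_exp hC (hY.fun_sub hY').norm <|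
    norm_sub_le_of_eq_volterra_add hC hG hGb hG'b hY hY' hYeq hY'eq hδ0 hδ
      (fun _ hτ => norm_le_iSup_norm isCompact_Icc hZ' hτ)
      (fun _ hτ => norm_le_iSup_norm isCompact_Icc (hZ.fun_sub hZ') hτ)
  refine Real.iSup_le (fun τ => (hgron τ τ.2).trans ?_) (by positivity)
  gcongr <;> exact τ.2.2

theorem iSup_norm_sub_le_min_of_eq_volterra_add {δ : ℝ} (hT : 0 ≤ T) (hC : 0 < C)
    (hG : Continuous fun p : ℝ × ℝ => G p.1 p.2) (hG' : Continuous fun p : ℝ × ℝ => G' p.1 p.2)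
    (hGb : ∀ τ ∈ Icc 0 T, ∀ σ ∈ Icc 0 τ, ‖G τ σ‖ ≤ C)
    (hG'b : ∀ τ ∈ Icc 0 T, ∀ σ ∈ Icc 0 τ, ‖G' τ σ‖ ≤ C)
    (hZ : ContinuousOn Z (Icc 0 T)) (hZ' : ContinuousOn Z' (Icc 0 T))
    (hY : ContinuousOn Y (Icc 0 T)) (hY' : ContinuousOn Y' (Icc 0 T))
    (hYeq : ∀ τ ∈ Icc 0 T, Y τ = volterra G Y τ + Z τ)
    (hY'eq : ∀ τ ∈ Icc 0 T, Y' τ = volterra G' Y' τ + Z' τ)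
    (hδ0 : 0 ≤ δ) (hδ : ∀ W : ℝ → X, ContinuousOn W (Icc 0 T) → ∀ τ ∈ Icc 0 T,
      ‖volterra G W τ - volterra G' W τ‖ ≤ δ * ⨆ σ : Icc 0 T, ‖W σ‖) :
    ⨆ τ : Icc 0 T, ‖Y τ - Y' τ‖ ≤
      (δ * min (⨆ τ : Icc 0 T, ‖Z τ‖) (⨆ τ : Icc 0 T, ‖Z' τ‖) * (1 + C * T) +
        ⨆ τ : Icc 0 T, ‖Z τ - Z' τ‖) * exp (C * T) := by
  have hYY' := iSup_norm_sub_le_of_eq_volterra_add hT hC hG hGb hG'b hZ hZ' hY hY'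
    hYeq hY'eq hδ0 hδ
  have hY'Y := iSup_norm_sub_le_of_eq_volterra_add hT hC hG' hG'b hGb hZ' hZ hY' hY
    hY'eq hYeq hδ0 fun W hW τ hτ => norm_sub_rev (volterra G W τ) _ ▸ hδ W hW τ hτ
  simp only [norm_sub_rev (Y' _), norm_sub_rev (Z' _)] at hY'Y
  rcases min_choice (⨆ τ : Icc 0 T, ‖Z τ‖) (⨆ τ : Icc 0 T, ‖Z' τ‖) with h | h <;>
    rw [h] <;> assumption

theorem nonneg_of_norm_volterra_sub_le_mul_iSup [Nontrivial X] {δ : ℝ} (hT : 0 ≤ T)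
    (hδ : ∀ W : ℝ → X, ContinuousOn W (Icc 0 T) → ∀ τ ∈ Icc 0 T,
      ‖volterra G W τ - volterra G' W τ‖ ≤ δ * ⨆ σ : Icc 0 T, ‖W σ‖) :
    0 ≤ δ := by
  obtain ⟨c, hc⟩ := exists_ne (0 : X)
  have : Nonempty (Icc 0 T) := (nonempty_Icc.2 hT).to_subtype
  have h0 := hδ (fun _ => c) continuousOn_const 0 ⟨le_rfl, hT⟩
  simp only [volterra, intervalIntegral.integral_same, sub_zero, norm_zero, ciSup_const] at h0
  exact nonneg_of_mul_nonneg_left h0 (norm_pos_iff.2 hc)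

end Volterra

theorem stmt_19_general {X : Type*} [NormedAddCommGroup X] [NormedSpace ℝ X]
    (T : ℝ) (hT : 0 < T)
    (G G' : ℝ → ℝ → (X →L[ℝ] X))
    (hGcont : Continuous fun p : ℝ × ℝ => G p.1 p.2)
    (hG'cont : Continuous fun p : ℝ × ℝ => G' p.1 p.2)
    (C : ℝ) (hC : 0 < C)
    (hGb : ∀ τ σ : ℝ, 0 ≤ σ → σ ≤ τ → τ ≤ T → ‖G τ σ‖ ≤ C ∧ ‖G' τ σ‖ ≤ C)
    (Z Z' Y Y' : ℝ → X)
    (hZ : ContinuousOn Z (Icc 0 T)) (hZ' : ContinuousOn Z' (Icc 0 T))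
    (hY : ContinuousOn Y (Icc 0 T)) (hY' : ContinuousOn Y' (Icc 0 T))
    (hYeq : ∀ τ ∈ Icc (0:ℝ) T, Y τ = (∫ σ in (0:ℝ)..τ, G τ σ (Y σ)) + Z τ)
    (hY'eq : ∀ τ ∈ Icc (0:ℝ) T, Y' τ = (∫ σ in (0:ℝ)..τ, G' τ σ (Y' σ)) + Z' τ)
    (δ : ℝ)
    (hδ : ∀ W : ℝ → X, ContinuousOn W (Icc 0 T) → ∀ τ ∈ Icc (0:ℝ) T,
      ‖(∫ σ in (0:ℝ)..τ, G τ σ (W σ)) - ∫ σ in (0:ℝ)..τ, G' τ σ (W σ)‖ ≤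
        δ * ⨆ σ : Icc (0:ℝ) T, ‖W σ‖) :
    (⨆ τ : Icc (0:ℝ) T, ‖Y τ - Y' τ‖) ≤
      1 / (T * C) * (Real.exp (2 * T * C) - 1) * δ *
          min (⨆ τ : Icc (0:ℝ) T, ‖Z τ‖) (⨆ τ : Icc (0:ℝ) T, ‖Z' τ‖) +
        Real.exp (2 * T * C) * ⨆ τ : Icc (0:ℝ) T, ‖Z τ - Z' τ‖ := by
  rcases subsingleton_or_nontrivial X with hX | hX
  · simp [Subsingleton.elim _ (0 : X)]
  have hδ0 : 0 ≤ δ := nonneg_of_norm_volterra_sub_le_mul_iSup hT.le hδ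
  have hmin := iSup_norm_sub_le_min_of_eq_volterra_add hT.le hC hGcont hG'cont
    (fun τ hτ σ hσ => (hGb τ σ hσ.1 hσ.2 hτ.2).1) (fun τ hτ σ hσ => (hGb τ σ hσ.1 hσ.2 hτ.2).2)
    hZ hZ' hY hY' hYeq hY'eq hδ0 hδ
  set m := min (⨆ τ : Icc (0:ℝ) T, ‖Z τ‖) (⨆ τ : Icc (0:ℝ) T, ‖Z' τ‖)
  set ε := ⨆ τ : Icc (0:ℝ) T, ‖Z τ - Z' τ‖
  have hm : 0 ≤ m := le_min (Real.iSup_nonneg fun _ => norm_nonneg _)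
    (Real.iSup_nonneg fun _ => norm_nonneg _)
  have hε : 0 ≤ ε := Real.iSup_nonneg fun _ => norm_nonneg _
  calc (⨆ τ : Icc (0:ℝ) T, ‖Y τ - Y' τ‖) ≤ (δ * m * (1 + C * T) + ε) * Real.exp (C * T) := hmin
    _ = δ * m * ((1 + T * C) * Real.exp (T * C)) + Real.exp (T * C) * ε := by ring_nf
    _ ≤ δ * m * (1 / (T * C) * (Real.exp (2 * (T * C)) - 1)) + Real.exp (2 * (T * C)) * ε := by
        gcongr δ * m * ?_ + exp ?_ * ε
        · exact one_add_mul_exp_le (mul_pos hT hC)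
        · linarith [mul_pos hT hC]
    _ = _ := by ring_nf

/-- Perturbation estimate for Volterra integral equations: if `Y = ℋY + Z` and
`Ỹ = ℋ̃Ỹ + Z̃` with kernels bounded by `C` and `δ` an upper bound for the
`𝒞 → 𝒞` norm of `ℋ − ℋ̃`, then
`‖Y − Ỹ‖_𝒞 ≤ (1/(TC))(e^{2TC} − 1) δ min{‖Z‖_𝒞, ‖Z̃‖_𝒞} + e^{2TC} ‖Z − Z̃‖_𝒞`. -/
theorem stmt_19 {X : Type*} [NormedAddCommGroup X] [NormedSpace ℝ X] [CompleteSpace X]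
    (T : ℝ) (hT : 0 < T)
    (G G' : ℝ → ℝ → (X →L[ℝ] X))
    (hGcont : Continuous fun p : ℝ × ℝ => G p.1 p.2)
    (hG'cont : Continuous fun p : ℝ × ℝ => G' p.1 p.2)
    (C : ℝ) (hC : 0 < C)
    (hGb : ∀ τ σ : ℝ, 0 ≤ σ → σ ≤ τ → τ ≤ T → ‖G τ σ‖ ≤ C ∧ ‖G' τ σ‖ ≤ C)
    (Z Z' Y Y' : ℝ → X)
    (hZ : ContinuousOn Z (Icc 0 T)) (hZ' : ContinuousOn Z' (Icc 0 T))
    (hY : ContinuousOn Y (Icc 0 T)) (hY' : ContinuousOn Y' (Icc 0 T))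
    (hYeq : ∀ τ ∈ Icc (0:ℝ) T, Y τ = (∫ σ in (0:ℝ)..τ, G τ σ (Y σ)) + Z τ)
    (hY'eq : ∀ τ ∈ Icc (0:ℝ) T, Y' τ = (∫ σ in (0:ℝ)..τ, G' τ σ (Y' σ)) + Z' τ)
    (δ : ℝ)
    (hδ : ∀ W : ℝ → X, ContinuousOn W (Icc 0 T) → ∀ τ ∈ Icc (0:ℝ) T,
      ‖(∫ σ in (0:ℝ)..τ, G τ σ (W σ)) - ∫ σ in (0:ℝ)..τ, G' τ σ (W σ)‖ ≤
        δ * ⨆ σ : Icc (0:ℝ) T, ‖W σ‖) :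
    (⨆ τ : Icc (0:ℝ) T, ‖Y τ - Y' τ‖) ≤
      1 / (T * C) * (Real.exp (2 * T * C) - 1) * δ *
          min (⨆ τ : Icc (0:ℝ) T, ‖Z τ‖) (⨆ τ : Icc (0:ℝ) T, ‖Z' τ‖) +
        Real.exp (2 * T * C) * ⨆ τ : Icc (0:ℝ) T, ‖Z τ - Z' τ‖ :=
  stmt_19_general T hT G G' hGcont hG'cont C hC hGb Z Z' Y Y' hZ hZ' hY hY' hYeq hY'eq δ hδ
end
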